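/- arXiv:1807.08111 — 3 statements merged into one kernel-verified Lean document; each statement's English description precedes it below -/
import Mathlib

section
/- For abelian groups G and H, there is an isomorphism Γ(G × H) ≅ Γ(G) × Γ(H) × (G ⊗ H), where G ⊗ H is the usual tensor product of abelian groups. -/
universe u

/-- Relations for Whitehead's universal quadratic functor Γ. -/
def gammaRels (A : Type u) [CommGroup A] : Set (FreeGroup A) :=
  { r | (∃ a : A, r = FreeGroup.of a⁻¹ * (FreeGroup.of a)⁻¹) ∨
        (∃ a b c : A, r =
          FreeGroup.of (a * b * c) * FreeGroup.of a * FreeGroup.of b * FreeGroup.of c *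
            (FreeGroup.of (a * b) * FreeGroup.of (b * c) * FreeGroup.of (c * a))⁻¹) ∨
        (∃ x y : FreeGroup A, r = x * y * x⁻¹ * y⁻¹) }

/-- Whitehead's universal quadratic functor. -/
def Gamma (A : Type u) [CommGroup A] : Type u := PresentedGroup (gammaRels A)

instance (A : Type u) [CommGroup A] : Group (Gamma A) :=
  inferInstanceAs (Group (PresentedGroup (gammaRels A)))

/-- Relations of the non-abelian tensor square. -/
def tensorRels (G : Type u) [Group G] : Set (FreeGroup (G × G)) :=
  { r | (∃ g g' h : G, r = FreeGroup.of (g * g', h) *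
          (FreeGroup.of (g * g' * g⁻¹, g * h * g⁻¹) * FreeGroup.of (g, h))⁻¹) ∨
        (∃ g h h' : G, r = FreeGroup.of (g, h * h') *
          (FreeGroup.of (g, h) * FreeGroup.of (h * g * h⁻¹, h * h' * h⁻¹))⁻¹) }

/-- The non-abelian tensor square `G ⊗ G`. -/
def TensorSquare (G : Type u) [Group G] : Type u := PresentedGroup (tensorRels G)

instance (G : Type u) [Group G] : Group (TensorSquare G) :=
  inferInstanceAs (Group (PresentedGroup (tensorRels G)))

/-- The generator `g ⊗ h` of the non-abelian tensor square. -/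
def tmul {G : Type u} [Group G] (g h : G) : TensorSquare G :=
  PresentedGroup.of (g, h)

/-- Relations of the non-abelian exterior square. -/
def exteriorRels (G : Type u) [Group G] : Set (FreeGroup (G × G)) :=
  tensorRels G ∪ { r | ∃ g : G, r = FreeGroup.of (g, g) }

/-- The non-abelian exterior square `G ∧ G`. -/
def ExteriorSquare (G : Type u) [Group G] : Type u := PresentedGroup (exteriorRels G)

instance (G : Type u) [Group G] : Group (ExteriorSquare G) :=
  inferInstanceAs (Group (PresentedGroup (exteriorRels G)))

/-- The generator `g ∧ h` of the non-abelian exterior square. -/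
def wedge {G : Type u} [Group G] (g h : G) : ExteriorSquare G :=
  PresentedGroup.of (g, h)

/-!
Write `γ` for `Gamma.of`. Since `(g, h) = (g, 1) * (1, h)`, the generator `γ (g, h)` is
`γ (g, 1) * γ (1, h)` times the cross effect `cross a b = γ (a * b) / (γ a * γ b)` at
`a = (g, 1)`, `b = (1, h)`. The second defining relation of `Γ` says exactly that the cross effect
is bi-multiplicative, so `(g, h) ↦ cross (g, 1) (1, h)` factors through `G ⊗ H`; together with
`Γ(inl)` and `Γ(inr)` it gives a map out of `Γ G × Γ H × (G ⊗ H)`. This map is inverse to the one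
induced by `γ (g, h) ↦ (γ g, γ h, g ⊗ h)`, which respects the relations because
`(g, h) ↦ g ⊗ h` is quadratic.
-/

open scoped TensorProduct

namespace Gamma

variable {A B : Type u} [CommGroup A] [CommGroup B]

def of (a : A) : Gamma A := PresentedGroup.of a

instance : CommGroup (Gamma A) where
  mul_comm x y := by
    induction x using PresentedGroup.induction_on with | H x =>
    induction y using PresentedGroup.induction_on with | H y =>
    have h := PresentedGroup.one_of_mem (rels := gammaRels A) (Or.inr (Or.inr ⟨x, y, rfl⟩))
    rwa [← commutatorElement_def, map_commutatorElement,
      commutatorElement_eq_one_iff_mul_comm] at h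

theorem of_inv (a : A) : of a⁻¹ = of a := by
  have h := PresentedGroup.one_of_mem (rels := gammaRels A) (Or.inl ⟨a, rfl⟩)
  rwa [map_mul, map_inv, mul_inv_eq_one] at h

theorem of_mul_mul (a b c : A) :
    of (a * b * c) * of a * of b * of c = of (a * b) * of (b * c) * of (c * a) := by
  have h := PresentedGroup.one_of_mem (rels := gammaRels A) (Or.inr (Or.inl ⟨a, b, c, rfl⟩))
  rwa [map_mul, map_inv, mul_inv_eq_one] at h

@[simp]
theorem of_one : of (1 : A) = 1 := by
  have h := of_mul_mul (1 : A) 1 1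
  simp only [mul_one] at h
  exact mul_left_cancel (a := of (1 : A) * of 1 * of 1) (by rw [h, mul_one])

@[ext]
theorem hom_ext {M : Type*} [Group M] {f g : Gamma A →* M} (h : ∀ a, f (of a) = g (of a)) :
    f = g :=
  PresentedGroup.ext h

def lift {M : Type*} [CommGroup M] (f : A → M) (hinv : ∀ a, f a⁻¹ = f a)
    (hrel : ∀ a b c,
      f (a * b * c) * f a * f b * f c = f (a * b) * f (b * c) * f (c * a)) :
    Gamma A →* M :=
  PresentedGroup.toGroup (f := f) <| by
    rintro r (⟨a, rfl⟩ | ⟨a, b, c, rfl⟩ | ⟨x, y, rfl⟩)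
    · simp [hinv]
    · simp [hrel]
    · simp [← commutatorElement_def, commutatorElement_eq_one_iff_mul_comm, mul_comm]

@[simp]
theorem lift_of {M : Type*} [CommGroup M] (f : A → M) (hinv hrel) (a : A) :
    lift f hinv hrel (of a) = f a :=
  PresentedGroup.toGroup.of _

def map (f : A →* B) : Gamma A →* Gamma B :=
  lift (fun a => of (f a)) (fun a => by rw [map_inv, of_inv])
    (fun a b c => by simp only [map_mul, of_mul_mul])

@[simp]
theorem map_of (f : A →* B) (a : A) : map f (of a) = of (f a) :=
  lift_of _ _ _ a

def cross (a b : A) : Gamma A := of (a * b) / (of a * of b)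

theorem of_mul_of_mul_cross (a b : A) : of a * of b * cross a b = of (a * b) :=
  mul_div_cancel _ _

theorem cross_comm (a b : A) : cross a b = cross b a := by
  rw [cross, cross, mul_comm a, mul_comm (of a)]

theorem cross_mul_left (a a' b : A) : cross (a * a') b = cross a b * cross a' b := by
  have h := congrArg Additive.ofMul (of_mul_mul a a' b)
  apply Additive.ofMul.injective
  simp only [cross, ofMul_div, ofMul_mul, mul_comm b a] at h ⊢
  linear_combination (norm := abel) h

theorem cross_mul_right (a b b' : A) : cross a (b * b') = cross a b * cross a b' := by
  rw [cross_comm, cross_mul_left, cross_comm b, cross_comm b']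

def crossHom : Additive A →+ Additive A →+ Additive (Gamma A) :=
  AddMonoidHom.mk'
    (fun a => AddMonoidHom.mk' (fun b => .ofMul (cross a.toMul b.toMul))
      (fun _ _ => congrArg Additive.ofMul (cross_mul_right _ _ _)))
    (fun _ _ => AddMonoidHom.ext fun _ => congrArg Additive.ofMul (cross_mul_left _ _ _))

variable (G H : Type u) [CommGroup G] [CommGroup H]

def ofTensor : Multiplicative (Additive G ⊗[ℤ] Additive H) →* Gamma (G × H) :=
  AddMonoidHom.toMultiplicativeLeft <| TensorProduct.liftAddHom
    ((crossHom.compl₂ (MonoidHom.inr G H).toAdditive).comp (MonoidHom.inl G H).toAdditive)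
    (fun n a b => by rw [map_zsmul, AddMonoidHom.smul_apply, map_zsmul])

theorem ofTensor_tmul (a : Additive G) (b : Additive H) :
    ofTensor G H (.ofAdd (a ⊗ₜ b)) = cross (a.toMul, 1) (1, b.toMul) :=
  rfl

def toTensor : Gamma (G × H) →* Multiplicative (Additive G ⊗[ℤ] Additive H) :=
  lift (fun p => .ofAdd (.ofMul p.1 ⊗ₜ .ofMul p.2))
    (fun p => by simp [TensorProduct.neg_tmul, TensorProduct.tmul_neg])
    (fun a b c => by
      simp only [Prod.fst_mul, Prod.snd_mul, ofMul_mul, ← ofAdd_add, TensorProduct.add_tmul,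
        TensorProduct.tmul_add]
      congr 1
      abel)

@[simp]
theorem toTensor_of (p : G × H) : toTensor G H (of p) = .ofAdd (.ofMul p.1 ⊗ₜ .ofMul p.2) :=
  lift_of _ _ _ _

def toProd : Gamma (G × H) →* Gamma G × Gamma H × Multiplicative (Additive G ⊗[ℤ] Additive H) :=
  (map (MonoidHom.fst G H)).prod ((map (MonoidHom.snd G H)).prod (toTensor G H))

@[simp]
theorem toProd_of (p : G × H) :
    toProd G H (of p) = (of p.1, of p.2, .ofAdd (.ofMul p.1 ⊗ₜ .ofMul p.2)) :=
  rfl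

def ofProd : Gamma G × Gamma H × Multiplicative (Additive G ⊗[ℤ] Additive H) →* Gamma (G × H) :=
  (map (MonoidHom.inl G H)).coprod ((map (MonoidHom.inr G H)).coprod (ofTensor G H))

theorem ofProd_comp_toProd : (ofProd G H).comp (toProd G H) = .id _ := by
  ext ⟨g, h⟩ : 1
  simp only [ofProd, MonoidHom.comp_apply, toProd_of, MonoidHom.coprod_apply, map_of,
    ofTensor_tmul, toMul_ofMul, MonoidHom.inl_apply, MonoidHom.inr_apply, MonoidHom.id_apply]
  rw [← mul_assoc, of_mul_of_mul_cross, Prod.mk_mul_mk, mul_one, one_mul]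

theorem toProd_comp_map_inl : (toProd G H).comp (map (MonoidHom.inl G H)) = .inl _ _ := by
  ext g : 1
  simp

theorem toProd_comp_map_inr :
    (toProd G H).comp (map (MonoidHom.inr G H)) = (MonoidHom.inr _ _).comp (.inl _ _) := by
  ext h : 1
  simp

theorem toProd_ofTensor (z : Additive G ⊗[ℤ] Additive H) :
    toProd G H (ofTensor G H (.ofAdd z)) = (1, 1, .ofAdd z) := by
  induction z using TensorProduct.induction_on with
  | zero => simp [Prod.one_eq_mk]
  | tmul a b => simp [ofTensor_tmul, cross]
  | add x y hx hy =>
    rw [ofAdd_add, map_mul, map_mul, hx, hy, Prod.mk_mul_mk, Prod.mk_mul_mk, one_mul, one_mul]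

theorem toProd_comp_ofTensor :
    (toProd G H).comp (ofTensor G H) = (MonoidHom.inr _ _).comp (.inr _ _) :=
  MonoidHom.ext fun z => toProd_ofTensor G H z.toAdd

theorem toProd_comp_ofProd : (toProd G H).comp (ofProd G H) = .id _ := by
  rw [ofProd, MonoidHom.comp_coprod, MonoidHom.comp_coprod, toProd_comp_map_inl,
    toProd_comp_map_inr, toProd_comp_ofTensor, ← MonoidHom.comp_coprod, MonoidHom.coprod_inl_inr,
    MonoidHom.comp_id, MonoidHom.coprod_inl_inr]

def prodEquiv :
    Gamma (G × H) ≃* Gamma G × Gamma H × Multiplicative (Additive G ⊗[ℤ] Additive H) :=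
  (toProd G H).toMulEquiv (ofProd G H) (ofProd_comp_toProd G H) (toProd_comp_ofProd G H)

end Gamma

/-- Γ(G × H) ≅ Γ(G) × Γ(H) × (G ⊗ H) for abelian groups G, H. -/
theorem gamma_prod (G H : Type u) [CommGroup G] [CommGroup H] :
    Nonempty (Gamma (G × H) ≃*
      Gamma G × Gamma H ×
        Multiplicative (TensorProduct ℤ (Additive G) (Additive H))) :=
  ⟨Gamma.prodEquiv G H⟩
end

section
/- Let G and H be arbitrary groups. Then the non-abelian tensor square of the direct product satisfies (G × H) ⊗ (G × H) ≅ (G ⊗ G) × (G^{ab} ⊗ H^{ab}) × (H^{ab} ⊗ G^{ab}) × (H ⊗ H). -/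
/-!
The map `(g₁, h₁) ⊗ (g₂, h₂) ↦ (g₁ ⊗ g₂, ḡ₁ ⊗ h̄₂, h̄₁ ⊗ ḡ₂, h₁ ⊗ h₂)` respects the defining
relations because conjugation acts trivially on abelianizations. For the inverse map, the key
input is the Peiffer identity `(g ⊗ h) t (g ⊗ h)⁻¹ = ⁅g, h⁆ • t`. It makes `x ⊗ y` central as soon
as `x` and `y` commute, so `(g, 1) ⊗ (1, h)` is central and biadditive in `g` and `h` and factors
through `Gᵃᵇ ⊗ Hᵃᵇ`; it also makes the images of `G ⊗ G` and `H ⊗ H` commute. The two maps are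
mutually inverse because `(g₁, h₁) ⊗ (g₂, h₂) = (g₁ ⊗ g₂)(g₁ ⊗ h₂)(h₁ ⊗ g₂)(h₁ ⊗ h₂)`.
-/

universe u

open scoped commutatorElement

theorem Commute.commutatorElement_left {G : Type*} [Group G] {a b c : G} (ha : Commute a b)
    (hc : Commute c b) : Commute ⁅a, c⁆ b := by
  rw [commutatorElement_def]
  exact ((ha.mul_left hc).mul_left ha.inv_left).mul_left hc.inv_left

namespace TensorSquare

variable {K : Type*} [Group K]

def lift {M : Type*} [Group M] (f : K → K → M)
    (hl : ∀ g g' h, f (g * g') h = f (g * g' * g⁻¹) (g * h * g⁻¹) * f g h)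
    (hr : ∀ g h h', f g (h * h') = f g h * f (h * g * h⁻¹) (h * h' * h⁻¹)) :
    TensorSquare K →* M :=
  PresentedGroup.toGroup (f := fun p => f p.1 p.2) <| by
    rintro r (⟨g, g', h, rfl⟩ | ⟨g, h, h', rfl⟩) <;>
      simp only [map_mul, map_inv, FreeGroup.lift_apply_of, mul_inv_eq_one]
    exacts [hl g g' h, hr g h h']

@[simp]
theorem lift_tmul {M : Type*} [Group M] (f : K → K → M) (hl hr) (g h : K) :
    lift f hl hr (tmul g h) = f g h :=
  PresentedGroup.toGroup.of _

@[ext]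
theorem hom_ext {M : Type*} [Group M] {φ ψ : TensorSquare K →* M}
    (h : ∀ g h, φ (tmul g h) = ψ (tmul g h)) : φ = ψ :=
  PresentedGroup.ext (rels := tensorRels K) (φ := φ) (ψ := ψ) fun p => h p.1 p.2

theorem mk_eq_one_of_mem {r : FreeGroup (K × K)} (hr : r ∈ tensorRels K) :
    PresentedGroup.mk (tensorRels K) r = 1 :=
  (QuotientGroup.eq_one_iff r).2 (Subgroup.subset_normalClosure hr)

theorem mul_tmul' (g g' h : K) :
    tmul (g * g') h = tmul (g * g' * g⁻¹) (g * h * g⁻¹) * tmul g h := by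
  have := mk_eq_one_of_mem (Or.inl ⟨g, g', h, rfl⟩)
  rwa [map_mul, map_inv, map_mul, mul_inv_eq_one] at this

theorem tmul_mul' (g h h' : K) :
    tmul g (h * h') = tmul g h * tmul (h * g * h⁻¹) (h * h' * h⁻¹) := by
  have := mk_eq_one_of_mem (Or.inr ⟨g, h, h', rfl⟩)
  rwa [map_mul, map_inv, map_mul, mul_inv_eq_one] at this

@[simp]
theorem tmul_one (g : K) : tmul g (1 : K) = 1 := by
  simpa using tmul_mul' g 1 1

@[simp]
theorem one_tmul (h : K) : tmul (1 : K) h = 1 := by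
  simpa using mul_tmul' 1 1 h

def map {A : Type*} [Group A] (f : A →* K) : TensorSquare A →* TensorSquare K :=
  lift (fun a b => tmul (f a) (f b))
    (fun g g' h => by simpa only [map_mul, map_inv] using mul_tmul' (f g) (f g') (f h))
    (fun g h h' => by simpa only [map_mul, map_inv] using tmul_mul' (f g) (f h) (f h'))

@[simp]
theorem map_tmul {A : Type*} [Group A] (f : A →* K) (a b : A) :
    map f (tmul a b) = tmul (f a) (f b) :=
  lift_tmul ..

def conj (k : K) : TensorSquare K →* TensorSquare K :=
  map (MulAut.conj k).toMonoidHom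

@[simp]
theorem conj_tmul (k g h : K) : conj k (tmul g h) = tmul (k * g * k⁻¹) (k * h * k⁻¹) :=
  map_tmul ..

theorem conj_mul (k k' : K) (t : TensorSquare K) : conj (k * k') t = conj k (conj k' t) := by
  have : conj (k * k') = (conj k).comp (conj k') := by ext; simp [mul_assoc]
  exact DFunLike.congr_fun this t

theorem conj_one (t : TensorSquare K) : conj 1 t = t := by
  have : conj (1 : K) = MonoidHom.id _ := by ext; simp
  exact DFunLike.congr_fun this t

theorem mul_tmul (g g' h : K) : tmul (g * g') h = conj g (tmul g' h) * tmul g h := by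
  rw [mul_tmul', conj_tmul]

theorem tmul_mul (g h h' : K) : tmul g (h * h') = tmul g h * conj h (tmul g h') := by
  rw [tmul_mul', conj_tmul]

-- Expand `(g x) ⊗ (h y)` in the two possible ways and cancel.
theorem tmul_mul_conj_tmul (g h x y : K) :
    tmul g h * conj (h * g) (tmul x y) = conj (g * h) (tmul x y) * tmul g h := by
  have e1 := mul_tmul g x (h * y)
  rw [tmul_mul x h y, tmul_mul g h y, map_mul, ← conj_mul] at e1
  have e2 := tmul_mul (g * x) h y
  rw [mul_tmul g x h, mul_tmul g x y, map_mul, ← conj_mul] at e2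
  have := e1.symm.trans e2
  simp only [mul_assoc, mul_right_inj] at this
  rw [← mul_assoc, ← mul_assoc, mul_left_inj] at this
  exact this.symm

/-- The Peiffer identity. -/
theorem conj_commutatorElement (g h : K) (t : TensorSquare K) :
    conj ⁅g, h⁆ t = tmul g h * t * (tmul g h)⁻¹ := by
  have : conj ⁅g, h⁆ = (MulAut.conj (tmul g h)).toMonoidHom := by
    ext x y
    have hxy : tmul x y =
        conj (h * g) (tmul ((h * g)⁻¹ * x * (h * g)) ((h * g)⁻¹ * y * (h * g))) := by
      simp only [conj_tmul]; group
    rw [MulEquiv.coe_toMonoidHom, MulAut.conj_apply, hxy, ← conj_mul, tmul_mul_conj_tmul,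
      mul_inv_cancel_right, show ⁅g, h⁆ * (h * g) = g * h by group]
  exact DFunLike.congr_fun this t

theorem commute_tmul_of_conj_eq {g h : K} {t : TensorSquare K} (ht : conj ⁅g, h⁆ t = t) :
    Commute (tmul g h) t := by
  rwa [conj_commutatorElement, mul_inv_eq_iff_eq_mul] at ht

theorem commute_tmul_of_commute {g h : K} (hgh : Commute g h) (t : TensorSquare K) :
    Commute (tmul g h) t :=
  commute_tmul_of_conj_eq <| by rw [commutatorElement_eq_one_iff_commute.2 hgh, conj_one]

theorem tmul_mem_center {g h : K} (hgh : Commute g h) :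
    tmul g h ∈ Subgroup.center (TensorSquare K) :=
  Subgroup.mem_center_iff.2 fun t => (commute_tmul_of_commute hgh t).eq.symm

theorem commute_tmul_tmul {a c b d : K} (hb : Commute ⁅a, c⁆ b) (hd : Commute ⁅a, c⁆ d) :
    Commute (tmul a c) (tmul b d) :=
  commute_tmul_of_conj_eq <| by
    rw [conj_tmul, hb.eq, hd.eq, mul_inv_cancel_right, mul_inv_cancel_right]

theorem tmul_conj_left {k a b : K} (hk : Commute k b) (ha : Commute a b) :
    tmul (k * a * k⁻¹) b = tmul a b := by
  have e1 := mul_tmul' k a b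
  rw [hk.eq, mul_inv_cancel_right] at e1
  have e2 := mul_tmul' a (a⁻¹ * k * a) b
  rw [ha.eq, mul_inv_cancel_right, show a * (a⁻¹ * k * a) = k * a by group,
    mul_inv_cancel_right, ← (commute_tmul_of_commute ha _).eq, e1] at e2
  exact mul_right_cancel e2

theorem tmul_conj_right {k a b : K} (hk : Commute b k) (ha : Commute b a) :
    tmul b (k * a * k⁻¹) = tmul b a := by
  have e1 := tmul_mul' b k a
  rw [← hk.eq, mul_inv_cancel_right] at e1
  have e2 := tmul_mul' b a (a⁻¹ * k * a)
  rw [← ha.eq, mul_inv_cancel_right, show a * (a⁻¹ * k * a) = k * a by group,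
    mul_inv_cancel_right, (commute_tmul_of_commute ha _).eq, e1] at e2
  exact mul_left_cancel e2

theorem mul_tmul_of_commute {a a' b : K} (ha : Commute a b) (ha' : Commute a' b) :
    tmul (a * a') b = tmul a b * tmul a' b := by
  rw [mul_tmul', ha.eq, mul_inv_cancel_right, tmul_conj_left ha ha']
  exact ((commute_tmul_of_commute ha _).eq).symm

theorem tmul_mul_of_commute {a b b' : K} (hb : Commute a b) (hb' : Commute a b') :
    tmul a (b * b') = tmul a b * tmul a b' := by
  rw [tmul_mul', ← hb.eq, mul_inv_cancel_right, tmul_conj_right hb hb']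

theorem mul_tmul_mul {a b c d : K} (hab : Commute a b) (had : Commute a d)
    (hcb : Commute c b) (hcd : Commute c d) :
    tmul (a * b) (c * d) = tmul a c * tmul a d * tmul b c * tmul b d := by
  have hbd : tmul b (c * d) = tmul b c * tmul b d := by
    rw [tmul_mul, conj_tmul, hcb.eq, hcd.eq, mul_inv_cancel_right, mul_inv_cancel_right]
  have had' : tmul a (c * d) = tmul a c * tmul a d := by
    rw [tmul_mul, conj_tmul, hcd.eq, mul_inv_cancel_right, tmul_conj_left hcd had]
  have hconj : conj a (tmul b c) = tmul b c := by
    rw [conj_tmul, hab.eq, mul_inv_cancel_right, tmul_conj_right hab.symm hcb.symm]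
  rw [mul_tmul, hbd, map_mul, hconj, conj_tmul, hab.eq, had.eq, mul_inv_cancel_right,
    mul_inv_cancel_right, had']
  have hbc_central := commute_tmul_of_commute hcb.symm
  have had_central := commute_tmul_of_commute had
  have hac_bd : Commute (tmul a c) (tmul b d) :=
    commute_tmul_tmul (hab.commutatorElement_left hcb) (had.commutatorElement_left hcd)
  calc tmul b c * tmul b d * (tmul a c * tmul a d)
      = tmul b d * tmul a c * tmul a d * tmul b c := by
        rw [mul_assoc, (hbc_central _).eq]; simp only [mul_assoc]
    _ = tmul a c * tmul a d * tmul b d * tmul b c := by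
        rw [← hac_bd.eq, mul_assoc (tmul a c), ← (had_central (tmul b d)).eq, ← mul_assoc]
    _ = tmul a c * tmul a d * tmul b c * tmul b d := by
        rw [mul_assoc _ (tmul b d), ← (hbc_central (tmul b d)).eq, ← mul_assoc]

theorem induction_on {p : TensorSquare K → Prop} (t : TensorSquare K)
    (tmul : ∀ g h, p (tmul g h)) (mul : ∀ x y, p x → p y → p (x * y))
    (inv : ∀ x, p x → p x⁻¹) : p t := by
  have one : p 1 := by simpa only [TensorSquare.tmul_one] using tmul 1 1
  exact PresentedGroup.generated_by (tensorRels K)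
    { carrier := {t | p t}, mul_mem' := mul _ _, one_mem' := one, inv_mem' := inv _ }
    (fun x => tmul x.1 x.2) t

theorem commute_map_map {A B : Type*} [Group A] [Group B] {i : A →* K} {j : B →* K}
    (hij : ∀ a b, Commute (i a) (j b)) (x : TensorSquare A) (y : TensorSquare B) :
    Commute (map i x) (map j y) := by
  induction x using induction_on with
  | tmul a a' =>
    induction y using induction_on with
    | tmul b b' =>
      have hcomm (b : B) : Commute ⁅i a, i a'⁆ (j b) :=
        (hij a b).commutatorElement_left (hij a' b)
      simpa only [map_tmul] using commute_tmul_tmul (hcomm b) (hcomm b')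
    | mul y y' hy hy' => rw [map_mul]; exact hy.mul_right hy'
    | inv y hy => rw [map_inv]; exact hy.inv_right
  | mul x x' hx hx' => rw [map_mul]; exact hx.mul_left hx'
  | inv x hx => rw [map_inv]; exact hx.inv_left

end TensorSquare

section AbTensor

open TensorSquare

variable {A B : Type*} [Group A] [Group B]

abbrev AbTensor (A B : Type*) [Group A] [Group B] : Type _ :=
  Multiplicative (TensorProduct ℤ (Additive (Abelianization A)) (Additive (Abelianization B)))

def abTmul (a : A) (b : B) : AbTensor A B :=
  .ofAdd (.ofMul (Abelianization.of a) ⊗ₜ .ofMul (Abelianization.of b))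

theorem abTmul_mul_left (a a' : A) (b : B) : abTmul (a * a') b = abTmul a b * abTmul a' b := by
  simp [abTmul, TensorProduct.add_tmul]

theorem abTmul_mul_right (a : A) (b b' : B) : abTmul a (b * b') = abTmul a b * abTmul a b' := by
  simp [abTmul, TensorProduct.tmul_add]

@[simp]
theorem abTmul_one_left (b : B) : abTmul (1 : A) b = 1 := by
  simp [abTmul]

@[simp]
theorem abTmul_one_right (a : A) : abTmul a (1 : B) = 1 := by
  simp [abTmul]

theorem abTmul_conj (k a : A) (l b : B) :
    abTmul (k * a * k⁻¹) (l * b * l⁻¹) = abTmul a b := by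
  simp [abTmul]

theorem AbTensor.hom_ext {M : Type*} [Monoid M] {φ ψ : AbTensor A B →* M}
    (h : ∀ a b, φ (abTmul a b) = ψ (abTmul a b)) : φ = ψ := by
  refine Multiplicative.monoidHom_ext _ _ (AddMonoidHom.ext fun x => ?_)
  induction x using TensorProduct.induction_on with
  | zero => simp only [map_zero]
  | tmul x y =>
    obtain ⟨x, rfl⟩ := Additive.ofMul.surjective x
    obtain ⟨y, rfl⟩ := Additive.ofMul.surjective y
    induction x using QuotientGroup.induction_on
    induction y using QuotientGroup.induction_on
    exact congrArg Additive.ofMul (h _ _)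
  | add x y hx hy => simp only [map_add, hx, hy]

open scoped IsMulCommutative

variable {K : Type*} [Group K] (i : A →* K) (j : B →* K) (hij : ∀ a b, Commute (i a) (j b))

def tmulCenter : A →* Abelianization B →* Subgroup.center (TensorSquare K) where
  toFun a := Abelianization.lift
    { toFun b := ⟨tmul (i a) (j b), tmul_mem_center (hij a b)⟩
      map_one' := Subtype.ext <| by simp
      map_mul' b b' := Subtype.ext <| by simp [tmul_mul_of_commute (hij a b) (hij a b')] }
  map_one' := Abelianization.hom_ext _ _ <| MonoidHom.ext fun b => Subtype.ext <| by simp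
  map_mul' a a' := Abelianization.hom_ext _ _ <| MonoidHom.ext fun b => Subtype.ext <| by
    simp [mul_tmul_of_commute (hij a b) (hij a' b)]

def ofAbTensor : AbTensor A B →* TensorSquare K :=
  (Subgroup.center _).subtype.comp <| AddMonoidHom.toMultiplicativeLeft <|
    TensorProduct.liftAddHom
      (AddMonoidHom.mk' (fun x : Additive (Abelianization A) =>
        MonoidHom.toAdditive (Abelianization.lift (tmulCenter i j hij) x.toMul))
        fun x y => by ext; simp)
      fun _ _ _ => by simp [map_zsmul]

@[simp]
theorem ofAbTensor_abTmul (a : A) (b : B) :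
    ofAbTensor i j hij (abTmul a b) = tmul (i a) (j b) := by
  simp [ofAbTensor, abTmul, tmulCenter]

theorem commute_ofAbTensor (x : AbTensor A B) (t : TensorSquare K) :
    Commute (ofAbTensor i j hij x) t :=
  (Subgroup.mem_center_iff.1 (Subtype.prop _) t).symm

end AbTensor

section Prod

open TensorSquare

variable (G H : Type*) [Group G] [Group H]

abbrev ProdDecomposition : Type _ :=
  TensorSquare G × AbTensor G H × AbTensor H G × TensorSquare H

def toDecomposition : TensorSquare (G × H) →* ProdDecomposition G H :=
  lift (fun p q => (tmul p.1 q.1, abTmul p.1 q.2, abTmul p.2 q.1, tmul p.2 q.2))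
    (fun g g' h => by
      refine Prod.ext (mul_tmul' ..) (Prod.ext ?_ (Prod.ext ?_ (mul_tmul' ..))) <;>
        simp only [Prod.fst_mul, Prod.snd_mul, Prod.fst_inv, Prod.snd_inv] <;>
        rw [abTmul_conj, abTmul_mul_left, mul_comm])
    (fun g h h' => by
      refine Prod.ext (tmul_mul' ..) (Prod.ext ?_ (Prod.ext ?_ (tmul_mul' ..))) <;>
        simp only [Prod.fst_mul, Prod.snd_mul, Prod.fst_inv, Prod.snd_inv] <;>
        rw [abTmul_conj, abTmul_mul_right])

@[simp]
theorem toDecomposition_tmul (p q : G × H) :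
    toDecomposition G H (tmul p q) =
      (tmul p.1 q.1, abTmul p.1 q.2, abTmul p.2 q.1, tmul p.2 q.2) :=
  lift_tmul ..

abbrev inlTmulInr : AbTensor G H →* TensorSquare (G × H) :=
  ofAbTensor (.inl G H) (.inr G H) MonoidHom.commute_inl_inr

abbrev inrTmulInl : AbTensor H G →* TensorSquare (G × H) :=
  ofAbTensor (.inr G H) (.inl G H) fun b a => (MonoidHom.commute_inl_inr a b).symm

def fromDecomposition : ProdDecomposition G H →* TensorSquare (G × H) :=
  (map (.inl G H)).noncommCoprod
    ((inlTmulInr G H).noncommCoprod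
      ((inrTmulInl G H).noncommCoprod (map (.inr G H)) fun _ _ => commute_ofAbTensor ..)
      fun _ _ => commute_ofAbTensor ..)
    fun x ⟨y, z, w⟩ => by
      simp only [MonoidHom.noncommCoprod_apply]
      exact (commute_ofAbTensor ..).symm.mul_right <| (commute_ofAbTensor ..).symm.mul_right <|
        commute_map_map MonoidHom.commute_inl_inr x w

theorem fromDecomposition_apply (x : ProdDecomposition G H) :
    fromDecomposition G H x = map (.inl G H) x.1 *
      (inlTmulInr G H x.2.1 * (inrTmulInl G H x.2.2.1 * map (.inr G H) x.2.2.2)) :=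
  rfl

theorem fromDecomposition_comp_toDecomposition :
    (fromDecomposition G H).comp (toDecomposition G H) = .id _ := by
  ext p q
  have hp : MonoidHom.inl G H p.1 * MonoidHom.inr G H p.2 = p := p.fst_mul_snd
  have hq : MonoidHom.inl G H q.1 * MonoidHom.inr G H q.2 = q := q.fst_mul_snd
  simp only [MonoidHom.comp_apply, toDecomposition_tmul, fromDecomposition_apply, map_tmul,
    ofAbTensor_abTmul, MonoidHom.id_apply]
  conv_rhs => rw [← hp, ← hq]
  rw [mul_tmul_mul (MonoidHom.commute_inl_inr ..) (MonoidHom.commute_inl_inr ..)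
    (MonoidHom.commute_inl_inr ..) (MonoidHom.commute_inl_inr ..)]
  simp only [mul_assoc]

theorem toDecomposition_map_inl (x : TensorSquare G) :
    toDecomposition G H (map (.inl G H) x) = (x, 1, 1, 1) := by
  have : (toDecomposition G H).comp (map (.inl G H)) = .inl _ _ :=
    hom_ext fun a b => by simp
  exact DFunLike.congr_fun this x

theorem toDecomposition_map_inr (x : TensorSquare H) :
    toDecomposition G H (map (.inr G H) x) = (1, 1, 1, x) := by
  have : (toDecomposition G H).comp (map (.inr G H)) =
      (MonoidHom.inr _ _).comp ((MonoidHom.inr _ _).comp (.inr _ _)) :=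
    hom_ext fun a b => by simp
  exact DFunLike.congr_fun this x

theorem toDecomposition_inlTmulInr (x : AbTensor G H) :
    toDecomposition G H (inlTmulInr G H x) = (1, x, 1, 1) := by
  have : (toDecomposition G H).comp (inlTmulInr G H) = (MonoidHom.inr _ _).comp (.inl _ _) :=
    AbTensor.hom_ext fun a b => by simp
  exact DFunLike.congr_fun this x

theorem toDecomposition_inrTmulInl (x : AbTensor H G) :
    toDecomposition G H (inrTmulInl G H x) = (1, 1, x, 1) := by
  have : (toDecomposition G H).comp (inrTmulInl G H) =
      (MonoidHom.inr _ _).comp ((MonoidHom.inr _ _).comp (.inl _ _)) :=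
    AbTensor.hom_ext fun a b => by simp
  exact DFunLike.congr_fun this x

theorem toDecomposition_comp_fromDecomposition :
    (toDecomposition G H).comp (fromDecomposition G H) = .id _ :=
  MonoidHom.ext fun x => by
    simp [fromDecomposition_apply, toDecomposition_map_inl, toDecomposition_map_inr,
      toDecomposition_inlTmulInr, toDecomposition_inrTmulInl, Prod.mk_one_one]

end Prod

/-- (G × H) ⊗ (G × H) ≅ (G ⊗ G) × (G^{ab} ⊗ H^{ab}) × (H^{ab} ⊗ G^{ab}) × (H ⊗ H). -/
theorem tensorSquare_prod (G H : Type u) [Group G] [Group H] :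
    Nonempty (TensorSquare (G × H) ≃*
      TensorSquare G ×
        Multiplicative
          (TensorProduct ℤ (Additive (Abelianization G)) (Additive (Abelianization H))) ×
        Multiplicative
          (TensorProduct ℤ (Additive (Abelianization H)) (Additive (Abelianization G))) ×
        TensorSquare H) :=
  ⟨(toDecomposition G H).toMulEquiv (fromDecomposition G H)
    (fromDecomposition_comp_toDecomposition G H) (toDecomposition_comp_fromDecomposition G H)⟩
end

section
/- Let G be a finite group and N a normal subgroup of G. Then the natural map induces an isomorphism G ∧ G ≅ (G/N) ∧ (G/N) if and only if N ≤ Z^∧(G), where Z^∧(G) is the exterior center of G. -/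
universe u

section Lemmas

variable {G : Type u} [Group G]

lemma exterior_rel_one {r : FreeGroup (G × G)} (hr : r ∈ exteriorRels G) :
    PresentedGroup.mk (exteriorRels G) r = 1 :=
  (QuotientGroup.eq_one_iff _).mpr (Subgroup.subset_normalClosure hr)

lemma wedge_mul_left (g g' h : G) :
    wedge (g * g') h = wedge (g * g' * g⁻¹) (g * h * g⁻¹) * wedge g h := by
  have h1 := exterior_rel_one (G := G)
    (Or.inl (Or.inl ⟨g, g', h, rfl⟩))
  rw [map_mul, map_inv, map_mul, mul_inv_eq_one] at h1
  exact h1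

lemma wedge_mul_right (g h h' : G) :
    wedge g (h * h') = wedge g h * wedge (h * g * h⁻¹) (h * h' * h⁻¹) := by
  have h1 := exterior_rel_one (G := G)
    (Or.inl (Or.inr ⟨g, h, h', rfl⟩))
  rw [map_mul, map_inv, map_mul, mul_inv_eq_one] at h1
  exact h1

lemma wedge_self (g : G) : wedge g g = 1 :=
  exterior_rel_one (Or.inr ⟨g, rfl⟩)

lemma wedge_one_left (h : G) : wedge (1 : G) h = 1 := by
  have h1 := wedge_mul_left (1 : G) 1 h
  simp only [mul_one, one_mul, inv_one] at h1
  exact mul_left_cancel (a := wedge (1:G) h) (by rw [mul_one, ← h1])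

lemma wedge_swap_aux (g h : G) :
    wedge (g * h * g⁻¹) g * wedge g (g * h * g⁻¹) = 1 := by
  have h0 := wedge_self (g * h)
  have h1 := wedge_mul_left g h (g * h)
  have h2 := wedge_mul_right g g h
  have h3 := wedge_mul_right (g * h * g⁻¹) g (g * h * g⁻¹)
  have e1 : g * (g * h) * g⁻¹ = g * (g * h * g⁻¹) := by group
  have e2 : g * g * g⁻¹ = g := by group
  have e3 : g * (g * h * g⁻¹) * g⁻¹ = g * h * g⁻¹ * (g * h * g⁻¹) * (g * h * g⁻¹)⁻¹ → True :=
    fun _ => trivial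
  rw [e1] at h1
  rw [e2, wedge_self, one_mul] at h2
  -- h3 : wedge (g*h*g⁻¹) (g * (g*h*g⁻¹)) = wedge (g*h*g⁻¹) g * wedge (g*(g*h*g⁻¹)*g⁻¹) (g*(g*h*g⁻¹)*g⁻¹)
  rw [wedge_self, mul_one] at h3
  rw [h0] at h1
  rw [h2] at h1
  rw [h3] at h1
  exact h1.symm

lemma wedge_swap (u v : G) : wedge u v * wedge v u = 1 := by
  have := wedge_swap_aux v (v⁻¹ * u * v)
  have e : v * (v⁻¹ * u * v) * v⁻¹ = u := by group
  rwa [e] at this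

end Lemmas

/-- For a finite group G and N ⊴ G, the natural map G ∧ G → (G/N) ∧ (G/N) is an
isomorphism iff N is contained in the exterior center of G. -/
theorem exteriorSquare_quotient_iso_iff (G : Type u) [Group G] [Finite G]
    (N : Subgroup G) [N.Normal]
    (φ : ExteriorSquare G →* ExteriorSquare (G ⧸ N))
    (hφ : ∀ g h : G, φ (wedge g h) = wedge (↑g : G ⧸ N) (↑h : G ⧸ N)) :
    Function.Bijective φ ↔ ∀ n ∈ N, ∀ h : G, wedge n h = (1 : ExteriorSquare G) := by
  constructor
  · intro hb n hn h
    apply hb.injective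
    rw [map_one, hφ, (QuotientGroup.eq_one_iff n).mpr hn, wedge_one_left]
  · intro hN
    -- symmetric vanishing
    have hN' : ∀ n ∈ N, ∀ g : G, wedge g n = 1 := by
      intro n hn g
      have := wedge_swap n g
      rw [hN n hn g, one_mul] at this
      exact this
    -- coset invariance
    have hcongr : ∀ g₁ g₂ h₁ h₂ : G, (↑g₁ : G ⧸ N) = ↑g₂ → (↑h₁ : G ⧸ N) = ↑h₂ →
        wedge g₁ h₁ = wedge g₂ h₂ := by
      have left_inv : ∀ (g h : G) (n : G), n ∈ N → wedge (g * n) h = wedge g h := by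
        intro g h n hn
        rw [wedge_mul_left, hN _ (Subgroup.Normal.conj_mem ‹N.Normal› n hn g), one_mul]
      have right_inv : ∀ (g h : G) (n : G), n ∈ N → wedge g (h * n) = wedge g h := by
        intro g h n hn
        rw [wedge_mul_right, hN' _ (Subgroup.Normal.conj_mem ‹N.Normal› n hn h), mul_one]
      intro g₁ g₂ h₁ h₂ hg hh
      have hg' : g₁⁻¹ * g₂ ∈ N := QuotientGroup.eq.mp hg
      have hh' : h₁⁻¹ * h₂ ∈ N := QuotientGroup.eq.mp hh
      calc wedge g₁ h₁ = wedge (g₁ * (g₁⁻¹ * g₂)) h₁ := (left_inv _ _ _ hg').symm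
        _ = wedge g₂ h₁ := by rw [mul_inv_cancel_left]
        _ = wedge g₂ (h₁ * (h₁⁻¹ * h₂)) := (right_inv _ _ _ hh').symm
        _ = wedge g₂ h₂ := by rw [mul_inv_cancel_left]
    -- the inverse map
    set f : (G ⧸ N) × (G ⧸ N) → ExteriorSquare G :=
      fun p => wedge p.1.out p.2.out with hf
    have fmk : ∀ g h : G, f (↑g, ↑h) = wedge g h := by
      intro g h
      exact hcongr _ _ _ _ (QuotientGroup.out_eq' _) (QuotientGroup.out_eq' _)
    have hrels : ∀ r ∈ exteriorRels (G ⧸ N), FreeGroup.lift f r = 1 := by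
      rintro r ((⟨x, y, z, rfl⟩ | ⟨x, y, z, rfl⟩) | ⟨x, rfl⟩)
      · obtain ⟨g, rfl⟩ := QuotientGroup.mk_surjective x
        obtain ⟨g', rfl⟩ := QuotientGroup.mk_surjective y
        obtain ⟨h, rfl⟩ := QuotientGroup.mk_surjective z
        rw [map_mul, map_inv, map_mul, FreeGroup.lift_apply_of, FreeGroup.lift_apply_of, FreeGroup.lift_apply_of,
          mul_inv_eq_one]
        show f (↑(g * g'), ↑h) = f (↑(g * g' * g⁻¹), ↑(g * h * g⁻¹)) * f (↑g, ↑h)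
        rw [fmk, fmk, fmk]
        exact wedge_mul_left g g' h
      · obtain ⟨g, rfl⟩ := QuotientGroup.mk_surjective x
        obtain ⟨h, rfl⟩ := QuotientGroup.mk_surjective y
        obtain ⟨h', rfl⟩ := QuotientGroup.mk_surjective z
        rw [map_mul, map_inv, map_mul, FreeGroup.lift_apply_of, FreeGroup.lift_apply_of, FreeGroup.lift_apply_of,
          mul_inv_eq_one]
        show f (↑g, ↑(h * h')) = f (↑g, ↑h) * f (↑(h * g * h⁻¹), ↑(h * h' * h⁻¹))
        rw [fmk, fmk, fmk]
        exact wedge_mul_right g h h'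
      · obtain ⟨g, rfl⟩ := QuotientGroup.mk_surjective x
        rw [FreeGroup.lift_apply_of, fmk]
        exact wedge_self g
    let ψ : ExteriorSquare (G ⧸ N) →* ExteriorSquare G := PresentedGroup.toGroup hrels
    have hψφ : ∀ a : ExteriorSquare G, ψ (φ a) = a := by
      have : ψ.comp φ = MonoidHom.id _ := by
        apply PresentedGroup.ext
        rintro ⟨g, h⟩
        show ψ (φ (wedge g h)) = wedge g h
        rw [hφ]
        have : ψ (PresentedGroup.of ((↑g : G ⧸ N), (↑h : G ⧸ N))) = f (↑g, ↑h) :=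
          PresentedGroup.toGroup.of hrels
        exact this.trans (fmk g h)
      intro a
      exact DFunLike.congr_fun this a
    have hφψ : ∀ b : ExteriorSquare (G ⧸ N), φ (ψ b) = b := by
      have : φ.comp ψ = MonoidHom.id _ := by
        apply PresentedGroup.ext
        rintro ⟨x, y⟩
        obtain ⟨g, rfl⟩ := QuotientGroup.mk_surjective x
        obtain ⟨h, rfl⟩ := QuotientGroup.mk_surjective y
        show φ (ψ (PresentedGroup.of ((↑g : G ⧸ N), (↑h : G ⧸ N)))) = _
        have : ψ (PresentedGroup.of ((↑g : G ⧸ N), (↑h : G ⧸ N))) = f (↑g, ↑h) :=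
          PresentedGroup.toGroup.of hrels
        rw [this, fmk, hφ]
        rfl
      intro b
      exact DFunLike.congr_fun this b
    exact ⟨Function.LeftInverse.injective hψφ, Function.RightInverse.surjective hφψ⟩
end
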